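/- arXiv:1304.0701 — 2 statements merged into one kernel-verified Lean document; each statement's English description precedes it below -/
import Mathlib

section
/- Let v, v′ ∈ ℤ × ℤ with cones V_v(x) = |x−v₁|+v₂ and V_{v′}(x) = |x−v′₁|+v′₂, and define the translation θ_v ξ(x) = ξ(x − v₁) − v₂ for ξ : ℤ → ℤ. If V_v ≥ V_{v′} pointwise and ξ ≤ ξ′ pointwise, then θ_v ξ ≤ θ_{v′} ξ′ pointwise. -/
/-- A function with unit increments is 1-Lipschitz. -/
lemma lipschitz_of_unit_steps (f : ℤ → ℤ) (hf : ∀ x : ℤ, |f (x + 1) - f x| = 1) :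
    ∀ a b : ℤ, |f a - f b| ≤ |a - b| := by
  have key : ∀ (n : ℕ) (b : ℤ), |f (b + n) - f b| ≤ n := by
    intro n
    induction n with
    | zero => simp
    | succ k ih =>
      intro b
      have h1 := hf (b + k)
      have h2 := ih b
      have : f (b + (k + 1 : ℕ)) - f b = (f (b + k + 1) - f (b + k)) + (f (b + k) - f b) := by
        push_cast; ring_nf
      rw [this]
      calc |(f (b + k + 1) - f (b + k)) + (f (b + k) - f b)|
          ≤ |f (b + k + 1) - f (b + k)| + |f (b + k) - f b| := abs_add_le _ _
        _ ≤ 1 + k := by rw [h1]; omega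
        _ = (k + 1 : ℕ) := by push_cast; ring
  intro a b
  rcases le_total b a with h | h
  · obtain ⟨n, hn⟩ := Int.le.dest h
    subst hn
    rw [show (b:ℤ) + n - b = n by ring, abs_of_nonneg (Int.natCast_nonneg n)]
    exact key n b
  · obtain ⟨n, hn⟩ := Int.le.dest h
    subst hn
    rw [abs_sub_comm, abs_sub_comm a, show (a:ℤ) + n - a = n by ring,
      abs_of_nonneg (Int.natCast_nonneg n)]
    exact key n a

/-- Monotonicity of cone translations: if the cone `V_v` dominates the cone
`V_{v'}` pointwise and the interface `ξ` is below `ξ'` pointwise, then the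
translated interface `θ_v ξ(x) = ξ(x − v₁) − v₂` is below `θ_{v'} ξ'`. -/
theorem translation_monotone (ξ ξ' : ℤ → ℤ) (v v' : ℤ × ℤ)
    (hξ : ∀ x : ℤ, |ξ (x + 1) - ξ x| = 1)
    (hξ' : ∀ x : ℤ, |ξ' (x + 1) - ξ' x| = 1)
    (hvv' : ∀ x : ℤ, |x - v'.1| + v'.2 ≤ |x - v.1| + v.2)
    (hle : ∀ x : ℤ, ξ x ≤ ξ' x) :
    ∀ x : ℤ, ξ (x - v.1) - v.2 ≤ ξ' (x - v'.1) - v'.2 := by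
  intro x
  have hv := hvv' v.1
  simp only [sub_self, abs_zero, zero_add] at hv
  -- hv : |v.1 - v'.1| + v'.2 ≤ v.2
  have hlip := lipschitz_of_unit_steps ξ' hξ' (x - v.1) (x - v'.1)
  have h1 : ξ' (x - v.1) - ξ' (x - v'.1) ≤ |v.1 - v'.1| := by
    have := abs_le.mp hlip
    have habs : |x - v.1 - (x - v'.1)| = |v.1 - v'.1| := by
      rw [abs_sub_comm]; congr 1; ring
    omega
  have h2 := hle (x - v.1)
  omega
end

section
/- Let ρ : ℝ → [0,1] be measurable with ∫_0^∞ ρ < ∞ and ∫_{−∞}^0 (1−ρ) < ∞ and ∫_0^∞ ρ = ∫_{−∞}^0 (1−ρ) (median at 0). Let G_t ρ(r) = ∫ G_t(r,r′) ρ(r′) dr′ with Gaussian kernel G_t(r,r′) = exp(−(r−r′)²/2t)/√(2πt). Then for every t > 0: (i) F(0; G_t ρ) = ∫_0^∞ G_t ρ(r) dr < ∞, (ii) F̂(0; G_t ρ) = ∫_{−∞}^0 (1 − G_t ρ(r)) dr < ∞, and (iii) F(0; G_t ρ) = F̂(0; G_t ρ), i.e. the median of G_t ρ remains at 0. -/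
open MeasureTheory

/-- The Gaussian heat kernel `G_t(r,r') = exp(−(r−r')²/(2t))/√(2πt)`. -/
noncomputable def gaussK (t r r' : ℝ) : ℝ :=
  Real.exp (-(r - r') ^ 2 / (2 * t)) / Real.sqrt (2 * Real.pi * t)

/-- The heat semigroup applied to a density: `G_t ρ(r) = ∫ G_t(r,r') ρ(r') dr'`. -/
noncomputable def heatEvol (t : ℝ) (ρ : ℝ → ℝ) (r : ℝ) : ℝ :=
  ∫ r', gaussK t r r' * ρ r'

/-!
Write `ρ = 𝟙_{(-∞,0)} + f`. The median condition on `ρ` says exactly that `f` is integrable with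
`∫ f = 0`, and both properties survive `G_t`, which is convolution with a probability density.
The step itself evolves into `φ(r) = G_t 𝟙_{(-∞,0)}(r) = ℙ(N(r,t) < 0)`, which satisfies
`φ(-r) = 1 - φ(r)` and has a Gaussian tail on `(0,∞)`, so `φ` has median `0` too. By linearity
`G_t ρ - 𝟙_{(-∞,0)} = (φ - 𝟙_{(-∞,0)}) + G_t f` is integrable with integral `0`, which is the
median condition for `G_t ρ`.
-/

open Set ProbabilityTheory
open scoped Convolution

lemma gaussK_eq_gaussianPDFReal (t r r' : ℝ) :
    gaussK t r r' = gaussianPDFReal 0 t.toNNReal (r - r') := by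
  rcases le_or_gt t 0 with ht | ht
  · simp [gaussK, Real.toNNReal_of_nonpos ht, Real.sqrt_eq_zero_of_nonpos,
      mul_nonpos_of_nonneg_of_nonpos (by positivity : 0 ≤ 2 * Real.pi) ht]
  · simp [gaussK, gaussianPDFReal, ht.le, div_eq_inv_mul]

lemma gaussK_nonneg (t r r' : ℝ) : 0 ≤ gaussK t r r' := by
  unfold gaussK; positivity

lemma gaussK_le (t r r' : ℝ) : gaussK t r r' ≤ (Real.sqrt (2 * Real.pi * t))⁻¹ := by
  rcases le_or_gt t 0 with ht | ht
  · simp [gaussK, Real.sqrt_eq_zero_of_nonpos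
      (mul_nonpos_of_nonneg_of_nonpos (by positivity : 0 ≤ 2 * Real.pi) ht)]
  · rw [gaussK, div_eq_mul_inv]
    refine mul_le_of_le_one_left (by positivity) (Real.exp_le_one_iff.2 ?_)
    exact div_nonpos_of_nonpos_of_nonneg (neg_nonpos.2 (sq_nonneg _)) (by positivity)

lemma gaussK_neg_left (t r r' : ℝ) : gaussK t (-r) r' = gaussK t r (-r') := by
  unfold gaussK; ring_nf

lemma measurable_uncurry_gaussK (t : ℝ) : Measurable (fun p : ℝ × ℝ => gaussK t p.1 p.2) := by
  unfold gaussK; fun_prop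

lemma integrable_gaussK (t r : ℝ) : Integrable (gaussK t r) := by
  simp_rw [funext (gaussK_eq_gaussianPDFReal t r)]
  exact (integrable_gaussianPDFReal 0 _).comp_sub_left r

lemma integral_gaussK {t : ℝ} (ht : 0 < t) (r : ℝ) : ∫ r', gaussK t r r' = 1 := by
  simp_rw [gaussK_eq_gaussianPDFReal t r]
  rw [integral_sub_left_eq_self (gaussianPDFReal 0 t.toNNReal) volume r,
    integral_gaussianPDFReal_eq_one 0 (by simpa using ht)]

lemma heatEvol_eq_convolution (t : ℝ) (f : ℝ → ℝ) :
    heatEvol t f = f ⋆ gaussianPDFReal 0 t.toNNReal := by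
  ext r
  simp only [heatEvol, convolution, ContinuousLinearMap.lsmul_apply, smul_eq_mul,
    gaussK_eq_gaussianPDFReal, mul_comm]

lemma integrable_heatEvol {f : ℝ → ℝ} (hf : Integrable f) (t : ℝ) :
    Integrable (heatEvol t f) := by
  rw [heatEvol_eq_convolution]
  exact hf.integrable_convolution _ (integrable_gaussianPDFReal 0 _)

lemma integral_heatEvol {t : ℝ} (ht : 0 < t) {f : ℝ → ℝ} (hf : Integrable f) :
    ∫ r, heatEvol t f r = ∫ r, f r := by
  rw [heatEvol_eq_convolution, integral_convolution _ hf (integrable_gaussianPDFReal 0 _),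
    integral_gaussianPDFReal_eq_one 0 (by simpa using ht)]
  simp

lemma measurable_heatEvol {f : ℝ → ℝ} (hf : Measurable f) (t : ℝ) :
    Measurable (heatEvol t f) :=
  (StronglyMeasurable.integral_prod_right' (f := fun p : ℝ × ℝ => gaussK t p.1 p.2 * f p.2)
    ((measurable_uncurry_gaussK t).mul (hf.comp measurable_snd)).stronglyMeasurable).measurable

lemma heatEvol_nonneg {f : ℝ → ℝ} (hf : 0 ≤ f) (t r : ℝ) : 0 ≤ heatEvol t f r :=
  integral_nonneg fun r' => mul_nonneg (gaussK_nonneg t r r') (hf r')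

lemma integrable_gaussK_mul {f : ℝ → ℝ} (hf : Integrable f) (t r : ℝ) :
    Integrable (fun r' => gaussK t r r' * f r') :=
  hf.bdd_mul (c := (Real.sqrt (2 * Real.pi * t))⁻¹)
    ((measurable_uncurry_gaussK t).comp measurable_prodMk_left).aestronglyMeasurable
    (ae_of_all _ fun r' => by
      rw [Real.norm_of_nonneg (gaussK_nonneg t r r')]; exact gaussK_le t r r')

lemma heatEvol_add {t : ℝ} {f g : ℝ → ℝ} (hf : ∀ r, Integrable (fun r' => gaussK t r r' * f r'))
    (hg : ∀ r, Integrable (fun r' => gaussK t r r' * g r')) :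
    heatEvol t (f + g) = heatEvol t f + heatEvol t g := by
  ext r
  simp only [heatEvol, Pi.add_apply, mul_add]
  exact integral_add (hf r) (hg r)

noncomputable def leftStep : ℝ → ℝ := (Iio 0).indicator 1

lemma measurable_leftStep : Measurable leftStep :=
  measurable_one.indicator measurableSet_Iio

lemma leftStep_nonneg : 0 ≤ leftStep :=
  indicator_nonneg fun _ _ => zero_le_one

lemma gaussK_mul_leftStep (t r r' : ℝ) :
    gaussK t r r' * leftStep r' = (Iio 0).indicator (gaussK t r) r' := by
  by_cases hr' : r' ∈ Iio 0 <;> simp [leftStep, hr']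

lemma integrable_gaussK_mul_leftStep (t r : ℝ) :
    Integrable (fun r' => gaussK t r r' * leftStep r') := by
  simp_rw [gaussK_mul_leftStep]
  exact (integrable_gaussK t r).indicator measurableSet_Iio

lemma heatEvol_leftStep (t r : ℝ) : heatEvol t leftStep r = ∫ r' in Iio 0, gaussK t r r' := by
  simp_rw [heatEvol, gaussK_mul_leftStep]
  exact integral_indicator measurableSet_Iio

lemma heatEvol_leftStep_neg {t : ℝ} (ht : 0 < t) (r : ℝ) :
    heatEvol t leftStep (-r) = 1 - heatEvol t leftStep r := by
  have reflected : heatEvol t leftStep (-r) = ∫ r' in Ioi 0, gaussK t r r' := by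
    rw [heatEvol_leftStep, setIntegral_congr_set Iio_ae_eq_Iic]
    simp_rw [gaussK_neg_left t r]
    rw [integral_comp_neg_Iic 0 (gaussK t r), neg_zero]
  have total : heatEvol t leftStep r + ∫ r' in Ioi 0, gaussK t r r' = 1 := by
    rw [heatEvol_leftStep, setIntegral_congr_set Iio_ae_eq_Iic,
      intervalIntegral.integral_Iic_add_Ioi (integrable_gaussK t r).integrableOn
        (integrable_gaussK t r).integrableOn, integral_gaussK ht r]
  linarith

lemma heatEvol_leftStep_le {t r : ℝ} (ht : 0 < t) (hr : 0 ≤ r) :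
    heatEvol t leftStep r ≤ Real.exp (-(2 * t)⁻¹ * r ^ 2) := by
  set e := Real.exp (-(2 * t)⁻¹ * r ^ 2)
  -- `(r - r')² ≥ r² + r'²` when `r' ≤ 0 ≤ r`
  have gaussian_split : ∀ r' ∈ Iio (0 : ℝ), gaussK t r r' ≤ e * gaussK t 0 r' := by
    intro r' hr'
    have hc : 0 < (2 * t)⁻¹ := by positivity
    simp only [gaussK, e, neg_div, div_eq_inv_mul (_ ^ 2), ← mul_div_assoc, ← Real.exp_add]
    gcongr
    nlinarith [mul_nonneg (mul_nonneg hc.le hr) (neg_nonneg.2 (le_of_lt hr'))]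
  calc heatEvol t leftStep r = ∫ r' in Iio 0, gaussK t r r' := heatEvol_leftStep t r
    _ ≤ ∫ r' in Iio 0, e * gaussK t 0 r' :=
      setIntegral_mono_on (integrable_gaussK t r).integrableOn
        ((integrable_gaussK t 0).const_mul e).integrableOn measurableSet_Iio gaussian_split
    _ ≤ ∫ r', e * gaussK t 0 r' :=
      setIntegral_le_integral ((integrable_gaussK t 0).const_mul e)
        (ae_of_all _ fun r' => mul_nonneg (Real.exp_pos _).le (gaussK_nonneg t 0 r'))
    _ = e := by rw [integral_const_mul, integral_gaussK ht, mul_one]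

lemma integrableOn_Ioi_heatEvol_leftStep {t : ℝ} (ht : 0 < t) :
    IntegrableOn (heatEvol t leftStep) (Ioi 0) :=
  (integrable_exp_neg_mul_sq (inv_pos.2 (mul_pos two_pos ht))).integrableOn.mono'
    (measurable_heatEvol measurable_leftStep t).aestronglyMeasurable
    ((ae_restrict_mem measurableSet_Ioi).mono fun r hr => by
      rw [Real.norm_of_nonneg (heatEvol_nonneg leftStep_nonneg t r)]
      exact heatEvol_leftStep_le ht (le_of_lt hr))

def MedianAtZero (g : ℝ → ℝ) : Prop :=
  IntegrableOn g (Ioi 0) ∧ IntegrableOn (fun r => 1 - g r) (Iio 0) ∧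
    ∫ r in Ioi 0, g r = ∫ r in Iio 0, (1 - g r)

lemma medianAtZero_iff {g : ℝ → ℝ} :
    MedianAtZero g ↔ Integrable (g - leftStep) ∧ ∫ r, (g - leftStep) r = 0 := by
  have on_Ici : EqOn (g - leftStep) g (Ici 0) := fun r hr => by
    simp [leftStep, not_lt.2 (mem_Ici.1 hr)]
  have on_Iio : EqOn (g - leftStep) (-fun r => 1 - g r) (Iio 0) := fun r hr => by
    simp [leftStep, mem_Iio.1 hr]
  have integrable_iff : Integrable (g - leftStep) ↔
      IntegrableOn g (Ioi 0) ∧ IntegrableOn (fun r => 1 - g r) (Iio 0) := by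
    rw [← integrableOn_univ, ← Iio_union_Ici, integrableOn_union, and_comm,
      integrableOn_congr_fun on_Ici measurableSet_Ici, integrableOn_Ici_iff_integrableOn_Ioi,
      integrableOn_congr_fun on_Iio measurableSet_Iio, integrableOn_neg_iff]
  have integral_eq (h : Integrable (g - leftStep)) :
      ∫ r, (g - leftStep) r = (∫ r in Ioi 0, g r) - ∫ r in Iio 0, (1 - g r) := by
    rw [← integral_add_compl measurableSet_Iio h, compl_Iio,
      setIntegral_congr_fun measurableSet_Iio on_Iio,
      setIntegral_congr_fun measurableSet_Ici on_Ici, integral_Ici_eq_integral_Ioi]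
    simp only [Pi.neg_apply, integral_neg]
    ring
  constructor
  · rintro ⟨hpos, hneg, hmedian⟩
    have h := integrable_iff.2 ⟨hpos, hneg⟩
    exact ⟨h, by rw [integral_eq h, hmedian, sub_self]⟩
  · rintro ⟨h, hzero⟩
    obtain ⟨hpos, hneg⟩ := integrable_iff.1 h
    exact ⟨hpos, hneg, sub_eq_zero.1 ((integral_eq h).symm.trans hzero)⟩

lemma medianAtZero_of_neg {φ : ℝ → ℝ} (hneg : ∀ r, φ (-r) = 1 - φ r)
    (hφ : IntegrableOn φ (Ioi 0)) : MedianAtZero φ := by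
  simp_rw [MedianAtZero, ← hneg]
  refine ⟨hφ, ?_, ?_⟩
  · have := ((Measure.measurePreserving_neg volume).integrableOn_comp_preimage
      (Homeomorph.neg ℝ).measurableEmbedding).2 hφ
    rwa [neg_preimage, neg_Ioi, neg_zero] at this
  · rw [setIntegral_congr_set Iio_ae_eq_Iic, integral_comp_neg_Iic, neg_zero]

lemma medianAtZero_heatEvol_leftStep {t : ℝ} (ht : 0 < t) :
    MedianAtZero (heatEvol t leftStep) :=
  medianAtZero_of_neg (heatEvol_leftStep_neg ht) (integrableOn_Ioi_heatEvol_leftStep ht)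

lemma medianAtZero_heatEvol {ρ : ℝ → ℝ} (hρ : MedianAtZero ρ) {t : ℝ} (ht : 0 < t) :
    MedianAtZero (heatEvol t ρ) := by
  obtain ⟨hint, hzero⟩ := medianAtZero_iff.1 hρ
  obtain ⟨hint_step, hzero_step⟩ := medianAtZero_iff.1 (medianAtZero_heatEvol_leftStep ht)
  have linear : heatEvol t ρ = heatEvol t leftStep + heatEvol t (ρ - leftStep) := by
    rw [← heatEvol_add (integrable_gaussK_mul_leftStep t) (integrable_gaussK_mul hint t),
      add_sub_cancel]
  have split : heatEvol t ρ - leftStep =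
      (heatEvol t leftStep - leftStep) + heatEvol t (ρ - leftStep) := by
    rw [linear]; abel
  rw [medianAtZero_iff, split]
  refine ⟨hint_step.add (integrable_heatEvol hint t), ?_⟩
  rw [integral_add' hint_step (integrable_heatEvol hint t), hzero_step,
    integral_heatEvol ht hint, hzero, add_zero]

theorem heat_preserves_median_general (ρ : ℝ → ℝ)
    (hF : IntegrableOn ρ (Set.Ioi (0 : ℝ)))
    (hFhat : IntegrableOn (fun r => 1 - ρ r) (Set.Iio (0 : ℝ)))
    (hmedian : ∫ r in Set.Ioi (0 : ℝ), ρ r = ∫ r in Set.Iio (0 : ℝ), (1 - ρ r)) :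
    ∀ t : ℝ, 0 < t →
      IntegrableOn (heatEvol t ρ) (Set.Ioi (0 : ℝ)) ∧
      IntegrableOn (fun r => 1 - heatEvol t ρ r) (Set.Iio (0 : ℝ)) ∧
      (∫ r in Set.Ioi (0 : ℝ), heatEvol t ρ r
        = ∫ r in Set.Iio (0 : ℝ), (1 - heatEvol t ρ r)) :=
  fun _ ht => medianAtZero_heatEvol ⟨hF, hFhat, hmedian⟩ ht

/-- If `ρ : ℝ → [0,1]` has finite mass to the right of `0`, finite antimass to
the left of `0`, and median at `0` (mass to the right equals antimass to the
left), then for every `t > 0` the heat evolution `G_t ρ` again has finite mass to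
the right of `0`, finite antimass to the left of `0`, and median at `0`. -/
theorem heat_preserves_median (ρ : ℝ → ℝ) (hmeas : Measurable ρ)
    (hmem : ∀ r : ℝ, ρ r ∈ Set.Icc (0 : ℝ) 1)
    (hF : IntegrableOn ρ (Set.Ioi (0 : ℝ)))
    (hFhat : IntegrableOn (fun r => 1 - ρ r) (Set.Iio (0 : ℝ)))
    (hmedian : ∫ r in Set.Ioi (0 : ℝ), ρ r = ∫ r in Set.Iio (0 : ℝ), (1 - ρ r)) :
    ∀ t : ℝ, 0 < t →
      IntegrableOn (heatEvol t ρ) (Set.Ioi (0 : ℝ)) ∧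
      IntegrableOn (fun r => 1 - heatEvol t ρ r) (Set.Iio (0 : ℝ)) ∧
      (∫ r in Set.Ioi (0 : ℝ), heatEvol t ρ r
        = ∫ r in Set.Iio (0 : ℝ), (1 - heatEvol t ρ r)) :=
  heat_preserves_median_general ρ hF hFhat hmedian
end
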